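/- Let k be any field and let A be a finite-dimensional unital division algebra over k. Then the right nucleus N = N_r(A) is a unital associative subalgebra of A in which every nonzero element is invertible (a skew field over k); A is a right vector space over N, the module structure being given by the multiplication of A; and dim_k(A) = dim_N(A) · dim_k(N). If in addition dim_k(N) = 2, then N is commutative, i.e., a field. -/

import Mathlib

/-!
If `z ≠ 0` lies in the right nucleus, bijectivity of `L_z` gives `w` with `z·w = 1`; then
`z·(w·z) = (z·w)·z = z` forces `w·z = 1`, and `((x·y)·w)·z = x·y = (x·(y·w))·z` together with
injectivity of `R_z` puts `w` in the nucleus. So the nucleus is a division ring over which `A`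
is a right vector space, and the dimension formula is the tower law. A `k`-algebra of
dimension `2` is spanned by `1` and any element outside `k·1`, hence is commutative.
-/

open Module Function

variable {k : Type} [Field k]

/-- The right nucleus `N_r(A)` as a `k`-subspace of `A`. -/
def rightNucleusSub {A : Type} [AddCommGroup A] [Module k A]
    (mul : A →ₗ[k] A →ₗ[k] A) : Submodule k A where
  carrier := {z | ∀ x y : A, mul (mul x y) z = mul x (mul y z)}
  add_mem' := by
    intro a b ha hb
    intro x y
    simp only [map_add]
    rw [ha x y, hb x y]
  zero_mem' := by
    intro x y
    simp only [map_zero]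
  smul_mem' := by
    intro t z hz
    intro x y
    simp only [map_smul]
    rw [hz x y]

open MulOpposite

theorem commute_of_finrank_eq_two {R : Type*} [Ring R] [Algebra k R] (h : finrank k R = 2)
    (a b : R) : Commute a b := by
  by_cases ha : a ∈ Set.range (algebraMap k R)
  · obtain ⟨r, rfl⟩ := ha
    exact Algebra.commutes r b
  have : Nontrivial R := Module.nontrivial_of_finrank_eq_succ h
  have hli : LinearIndependent k ![1, a] := by
    refine LinearIndependent.pair_iff.2 fun s t hst => ?_
    obtain rfl : t = 0 := by
      by_contra ht
      refine ha ⟨-(t⁻¹ * s), ?_⟩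
      have hta : t • a = -(s • 1) := eq_neg_of_add_eq_zero_right hst
      rw [Algebra.algebraMap_eq_smul_one, ← inv_smul_smul₀ ht a, hta, smul_neg, smul_smul,
        neg_smul]
    rw [zero_smul, add_zero, smul_eq_zero] at hst
    exact ⟨hst.resolve_right one_ne_zero, rfl⟩
  have hspan := hli.span_eq_top_of_card_eq_finrank (by simpa using h.symm)
  have hb : b ∈ Submodule.span k {1, a} := by
    rw [← Matrix.range_cons_cons_empty 1 a ![], hspan]
    exact Submodule.mem_top
  obtain ⟨s, t, rfl⟩ := Submodule.mem_span_pair.1 hb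
  exact ((Commute.one_right a).smul_right s).add_right ((Commute.refl a).smul_right t)

section

variable {A : Type} [AddCommGroup A] [Module k A] {mul : A →ₗ[k] A →ₗ[k] A}

theorem one_mem_rightNucleusSub {one : A} (h : ∀ x, mul x one = x) :
    one ∈ rightNucleusSub mul := fun x y => by rw [h, h]

theorem mul_mem_rightNucleusSub {z w : A} (hz : z ∈ rightNucleusSub mul)
    (hw : w ∈ rightNucleusSub mul) : mul z w ∈ rightNucleusSub mul := fun x y => by
  rw [← hw, hz, hw, hw]

theorem exists_inv_mem_rightNucleusSub {one z : A} (hone : ∀ x, mul one x = x ∧ mul x one = x)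
    (hL : Bijective (mul z)) (hR : Injective fun x => mul x z) (hz : z ∈ rightNucleusSub mul) :
    ∃ w ∈ rightNucleusSub mul, mul z w = one ∧ mul w z = one := by
  obtain ⟨w, hzw⟩ := hL.2 one
  have hwz : mul w z = one := hL.1 <| by
    rw [← hz, hzw, (hone z).1, (hone z).2]
  refine ⟨w, fun x y => hR ?_, hzw, hwz⟩
  show mul (mul (mul x y) w) z = mul (mul x (mul y w)) z
  rw [hz, hwz, (hone _).2, hz, hz, hwz, (hone y).2]

variable (mul) in
/-- Carrying the unit as instance data lets the ring structure of the right nucleus be an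
instance. -/
class TwoSidedUnit where
  one : A
  one_mul : ∀ x, mul one x = x
  mul_one : ∀ x, mul x one = x

variable [TwoSidedUnit mul]

open TwoSidedUnit

instance : Ring (rightNucleusSub mul) where
  mul z w := ⟨mul z w, mul_mem_rightNucleusSub z.2 w.2⟩
  one := ⟨one mul, one_mem_rightNucleusSub mul_one⟩
  mul_assoc a b c := Subtype.ext (c.2 a b)
  one_mul a := Subtype.ext (one_mul a.1)
  mul_one a := Subtype.ext (mul_one a.1)
  left_distrib a b c := Subtype.ext (map_add (mul a.1) b.1 c.1)
  right_distrib a b c := Subtype.ext (LinearMap.map_add₂ mul a.1 b.1 c.1)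
  zero_mul a := Subtype.ext (LinearMap.map_zero₂ mul a.1)
  mul_zero a := Subtype.ext (map_zero (mul a.1))

instance : Algebra k (rightNucleusSub mul) :=
  .ofModule (fun r x y => Subtype.ext (LinearMap.map_smul₂ mul r x.1 y.1))
    (fun r x y => Subtype.ext (map_smul (mul x.1) r y.1))

instance : Module (rightNucleusSub mul)ᵐᵒᵖ A where
  smul n x := mul x n.unop
  one_smul := mul_one
  mul_smul n m x := (n.unop.2 x m.unop).symm
  smul_zero _ := LinearMap.map_zero₂ mul _
  smul_add _ x y := LinearMap.map_add₂ mul x y _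
  add_smul _ _ x := map_add (mul x) _ _
  zero_smul x := map_zero (mul x)

instance : IsScalarTower k (rightNucleusSub mul)ᵐᵒᵖ A :=
  ⟨fun r n x => map_smul (mul x) r n.unop.1⟩

instance [FiniteDimensional k A] : Module.Finite (rightNucleusSub mul)ᵐᵒᵖ A :=
  .of_restrictScalars_finite k _ A

theorem TwoSidedUnit.one_ne_zero [Nontrivial A] : one mul ≠ 0 := fun h => by
  obtain ⟨x, hx⟩ := exists_ne (0 : A)
  exact hx (by rw [← TwoSidedUnit.one_mul (mul := mul) x, h, LinearMap.map_zero₂])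

instance [Nontrivial A] : Nontrivial (rightNucleusSub mul) :=
  ⟨⟨1, 0, fun h => TwoSidedUnit.one_ne_zero (congrArg Subtype.val h)⟩⟩

noncomputable abbrev rightNucleusDivisionRing [Nontrivial A]
    (hdiv : ∀ a : A, a ≠ 0 → Bijective (fun x => mul a x) ∧ Bijective (fun x => mul x a)) :
    DivisionRing (rightNucleusSub mul) :=
  .ofIsUnitOrEqZero fun z => or_iff_not_imp_right.2 fun hz => by
    have hz' : (z : A) ≠ 0 := fun h => hz (Subtype.ext h)
    obtain ⟨w, hw, hzw, hwz⟩ := exists_inv_mem_rightNucleusSub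
      (fun x => ⟨one_mul x, mul_one x⟩) (hdiv z hz').1 (hdiv z hz').2.1 z.2
    exact ⟨⟨z, ⟨w, hw⟩, Subtype.ext hzw, Subtype.ext hwz⟩, rfl⟩

theorem existsUnique_rightNucleus_coords {ι : Type*} [Fintype ι]
    (b : Basis ι (rightNucleusSub mul)ᵐᵒᵖ A) (x : A) :
    ∃! f : ι → A, (∀ i, f i ∈ rightNucleusSub mul) ∧ x = ∑ i, mul (b i) (f i) := by
  refine ⟨fun i => (b.repr x i).unop,
    ⟨fun i => (b.repr x i).unop.2, (b.sum_repr x).symm⟩, ?_⟩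
  rintro f ⟨hf, rfl⟩
  funext i
  exact (congrArg (fun c => ((c i).unop : A)) (b.repr_sum_self fun i => op ⟨f i, hf i⟩)).symm

theorem finrank_rightNucleus_mul_finrank [Nontrivial A] [FiniteDimensional k A]
    (hdiv : ∀ a : A, a ≠ 0 → Bijective (fun x => mul a x) ∧ Bijective (fun x => mul x a)) :
    finrank k (rightNucleusSub mul) * finrank (rightNucleusSub mul)ᵐᵒᵖ A = finrank k A := by
  let := rightNucleusDivisionRing hdiv
  rw [(opLinearEquiv k).finrank_eq, Module.finrank_mul_finrank]

end

/-- Let `k` be any field and `A` a finite-dimensional unital division algebra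
over `k`. Then the right nucleus `N = N_r(A)` is a unital associative subalgebra of `A` in
which every nonzero element is invertible (a skew field over `k`); `A` is a free right
`N`-vector space (module structure given by the multiplication of `A`), with
`dim_k(A) = dim_N(A) · dim_k(N)`; and if `dim_k(N) = 2`, then `N` is commutative. -/
theorem rightNucleus_skewField
    (A : Type) [AddCommGroup A] [Module k A] [FiniteDimensional k A]
    (mul : A →ₗ[k] A →ₗ[k] A) (one : A)
    (hA : ∃ x : A, x ≠ 0)
    (hone : ∀ x : A, mul one x = x ∧ mul x one = x)
    (hdiv : ∀ a : A, a ≠ 0 →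
      Function.Bijective (fun x => mul a x) ∧ Function.Bijective (fun x => mul x a)) :
    -- N is a unital associative subalgebra
    one ∈ rightNucleusSub mul ∧
    (∀ z ∈ rightNucleusSub mul, ∀ w ∈ rightNucleusSub mul, mul z w ∈ rightNucleusSub mul) ∧
    (∀ z ∈ rightNucleusSub mul, ∀ w ∈ rightNucleusSub mul, ∀ v ∈ rightNucleusSub mul,
      mul (mul z w) v = mul z (mul w v)) ∧
    -- every nonzero element of N is invertible in N
    (∀ z ∈ rightNucleusSub mul, z ≠ 0 →
      ∃ w ∈ rightNucleusSub mul, mul z w = one ∧ mul w z = one) ∧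
    -- A is a free right N-vector space and the dimension formula holds
    (∃ n : ℕ, ∃ b : Fin n → A,
      (∀ x : A, ∃! f : Fin n → A, (∀ i, f i ∈ rightNucleusSub mul) ∧
        x = ∑ i, mul (b i) (f i)) ∧
      finrank k A = n * finrank k ↥(rightNucleusSub mul)) ∧
    -- if dim_k N = 2 then N is commutative
    (finrank k ↥(rightNucleusSub mul) = 2 →
      ∀ z ∈ rightNucleusSub mul, ∀ w ∈ rightNucleusSub mul, mul z w = mul w z) := by
  obtain ⟨x, hx⟩ := hA
  have : Nontrivial A := nontrivial_of_ne x 0 hx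
  let : TwoSidedUnit mul := ⟨one, fun x => (hone x).1, fun x => (hone x).2⟩
  refine ⟨one_mem_rightNucleusSub fun x => (hone x).2,
    fun _ hz _ hw => mul_mem_rightNucleusSub hz hw, fun z _ w _ _ hv => hv z w,
    fun z hz hz0 => ?_, ?_, fun h z hz w hw => ?_⟩
  · exact exists_inv_mem_rightNucleusSub hone (hdiv z hz0).1 (hdiv z hz0).2.1 hz
  · let := rightNucleusDivisionRing hdiv
    exact ⟨_, Module.finBasis (rightNucleusSub mul)ᵐᵒᵖ A, existsUnique_rightNucleus_coords _,
      by rw [← finrank_rightNucleus_mul_finrank hdiv, mul_comm]⟩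
  · exact congrArg Subtype.val (commute_of_finrank_eq_two h ⟨z, hz⟩ ⟨w, hw⟩)
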